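/- For every n ≥ 1, the Morse complex M(P_{3n-1}) of the path on 3n vertices is strongly collapsible. -/

import Mathlib

open Finset

/-- An abstract simplicial complex on vertex type `V`. -/
structure SComplex (V : Type*) where
  faces : Finset V → Prop
  not_empty : ¬ faces ∅
  down_closed : ∀ {σ τ : Finset V}, faces τ → σ ⊆ τ → σ.Nonempty → faces σ

/-- The complex generated by a set of simplices (downward closure). -/
def ofGens {V : Type*} (gens : Set (Finset V)) : SComplex V where
  faces σ := σ.Nonempty ∧ ∃ τ ∈ gens, σ ⊆ τ
  not_empty h := by simpa using h.1
  down_closed := by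
    rintro σ τ ⟨-, τ', hτ', hsub'⟩ hsub hne
    exact ⟨hne, τ', hτ', hsub.trans hsub'⟩

/-- A primitive (gradient) vector field on `K`: a single regular pair `(σ, τ)`
with `σ` a codimension-one face of `τ`. -/
structure VPair {V : Type*} (K : SComplex V) where
  lo : Finset V
  hi : Finset V
  lo_face : K.faces lo
  hi_face : K.faces hi
  lo_sub : lo ⊆ hi
  card_eq : hi.card = lo.card + 1

noncomputable instance {V : Type*} (K : SComplex V) : DecidableEq (VPair K) :=
  Classical.decEq _

/-- Two primitive pairs share no simplex. -/
def VPair.Compatible {V : Type*} {K : SComplex V} (p q : VPair K) : Prop :=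
  p.lo ≠ q.lo ∧ p.lo ≠ q.hi ∧ p.hi ≠ q.lo ∧ p.hi ≠ q.hi

/-- A discrete vector field: each simplex occurs in at most one pair. -/
def IsDVF {V : Type*} {K : SComplex V} (W : Set (VPair K)) : Prop :=
  ∀ p ∈ W, ∀ q ∈ W, p ≠ q → VPair.Compatible p q

/-- Existence of a nontrivial closed `V`-path. -/
def HasClosedPath {V : Type*} {K : SComplex V} (W : Set (VPair K)) : Prop :=
  ∃ k : ℕ, 0 < k ∧ ∃ c : ZMod k → VPair K, (∀ i, c i ∈ W) ∧
    ∀ i, (c (i + 1)).lo ⊆ (c i).hi ∧ (c (i + 1)).lo ≠ (c i).lo ∧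
      (c (i + 1)).lo.card + 1 = (c i).hi.card

/-- A gradient vector field: a discrete vector field with no nontrivial closed path. -/
def IsGVF {V : Type*} {K : SComplex V} (W : Set (VPair K)) : Prop :=
  IsDVF W ∧ ¬ HasClosedPath W

/-- The Morse complex of `K`: vertices are primitive gradient vector fields,
simplices are gradient vector fields. -/
def MorseComplex {V : Type*} (K : SComplex V) : SComplex (VPair K) where
  faces S := S.Nonempty ∧ IsGVF {p | p ∈ S}
  not_empty h := by simpa using h.1
  down_closed := by
    rintro σ τ ⟨hne', hdvf, hnc⟩ hsub hne
    refine ⟨hne, fun p hp q hq hpq => hdvf p (hsub hp) q (hsub hq) hpq, fun h => hnc ?_⟩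
    obtain ⟨k, hk, c, hc, hpath⟩ := h
    exact ⟨k, hk, c, fun i => hsub (hc i), hpath⟩

/-- The pure Morse complex: the subcomplex of `MorseComplex K` generated by the
facets of maximum dimension (maximum gradient vector fields). -/
def pureMorse {V : Type*} (K : SComplex V) : SComplex (VPair K) where
  faces S := (MorseComplex K).faces S ∧ ∃ T : Finset (VPair K), S ⊆ T ∧
      (MorseComplex K).faces T ∧
      ∀ T' : Finset (VPair K), (MorseComplex K).faces T' → T'.card ≤ T.card
  not_empty h := (MorseComplex K).not_empty h.1
  down_closed := by
    rintro σ τ ⟨hτ, T, hsub', hT, hmax⟩ hsub hne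
    exact ⟨(MorseComplex K).down_closed hτ hsub hne, T, hsub.trans hsub', hT, hmax⟩

/-- `σ` is a facet (maximal simplex) of `K`. -/
def IsFacet {V : Type*} (K : SComplex V) (σ : Finset V) : Prop :=
  K.faces σ ∧ ∀ τ, K.faces τ → σ ⊆ τ → σ = τ

/-- `w` dominates `w'`: every facet containing `w'` contains `w`. -/
def Dominates {V : Type*} (K : SComplex V) (w w' : V) : Prop :=
  ∀ σ, IsFacet K σ → w' ∈ σ → w ∈ σ

/-- `K` is minimal: no vertex dominates another vertex. -/
def MinimalComplex {V : Type*} (K : SComplex V) : Prop :=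
  ∀ w w' : V, K.faces {w} → K.faces {w'} → w ≠ w' → ¬ Dominates K w w'

/-- Strong collapsibility of a face predicate: a sequence of removals of
dominated vertices reaching a single point. -/
inductive SCAux {V : Type*} : (Finset V → Prop) → Prop
  | point (F : Finset V → Prop) (v : V) (h : ∀ σ, F σ ↔ σ = {v}) : SCAux F
  | step (F : Finset V → Prop) (w w' : V) (hne : w ≠ w') (hw : F {w}) (hw' : F {w'})
      (hdom : ∀ σ, (F σ ∧ ∀ τ, F τ → σ ⊆ τ → σ = τ) → w' ∈ σ → w ∈ σ)
      (h : SCAux (fun σ => F σ ∧ w' ∉ σ)) : SCAux F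

def StronglyCollapsible {V : Type*} (K : SComplex V) : Prop := SCAux K.faces

/-- `F` strongly collapses to `G` by a sequence of removals of dominated vertices. -/
inductive SCTo {V : Type*} : (Finset V → Prop) → (Finset V → Prop) → Prop
  | refl (F : Finset V → Prop) : SCTo F F
  | step (F G : Finset V → Prop) (w w' : V) (hne : w ≠ w') (hw : F {w}) (hw' : F {w'})
      (hdom : ∀ σ, (F σ ∧ ∀ τ, F τ → σ ⊆ τ → σ = τ) → w' ∈ σ → w ∈ σ)
      (h : SCTo (fun σ => F σ ∧ w' ∉ σ) G) : SCTo F G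

/-- Collapsibility (Forman): removal of free pairs down to a point. -/
inductive CollAux {V : Type*} : (Finset V → Prop) → Prop
  | point (F : Finset V → Prop) (v : V) (h : ∀ σ, F σ ↔ σ = {v}) : CollAux F
  | step (F : Finset V → Prop) (σ τ : Finset V) (hστ : σ ⊂ τ) (hσ : F σ) (hτ : F τ)
      (hfree : ∀ ρ, F ρ → σ ⊂ ρ → ρ = τ)
      (h : CollAux (fun ρ => F ρ ∧ ρ ≠ σ ∧ ρ ≠ τ)) : CollAux F

def Collapsible {V : Type*} (K : SComplex V) : Prop := CollAux K.faces

/-- The degree of a vertex: the number of edges of `K` containing it. -/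
noncomputable def sdeg {V : Type*} (K : SComplex V) (x : V) : ℕ :=
  Set.ncard {σ : Finset V | K.faces σ ∧ σ.card = 2 ∧ x ∈ σ}

/-- Image of a finset, with a classical decidability instance. -/
noncomputable def fimage {V W : Type*} (f : V → W) (σ : Finset V) : Finset W :=
  haveI := Classical.decEq W
  σ.image f

/-- An isomorphism between two simplicial complexes given by face predicates. -/
structure ComplexIso {V W : Type*} (F : Finset V → Prop) (G : Finset W → Prop) where
  toFun : V → W
  invFun : W → V
  left_inv : ∀ x, F {x} → invFun (toFun x) = x
  right_inv : ∀ y, G {y} → toFun (invFun y) = y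
  map_face : ∀ σ, F σ → G (fimage toFun σ)
  inv_face : ∀ τ, G τ → F (fimage invFun τ)

/-- The join of two simplicial complexes. -/
def sJoin {V W : Type*} [DecidableEq V] [DecidableEq W] (K : SComplex V) (L : SComplex W) :
    SComplex (V ⊕ W) :=
  ofGens {σ | ∃ α β, (K.faces α ∨ α = ∅) ∧ (L.faces β ∨ β = ∅) ∧
    σ = α.image Sum.inl ∪ β.image Sum.inr}

/-- The disjoint union of two simplicial complexes. -/
def sDisjUnion {V W : Type*} [DecidableEq V] [DecidableEq W] (K : SComplex V) (L : SComplex W) :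
    SComplex (V ⊕ W) :=
  ofGens ({σ | ∃ α, K.faces α ∧ σ = α.image Sum.inl} ∪
          {σ | ∃ β, L.faces β ∧ σ = β.image Sum.inr})

/-- The simplicial complex of a simple graph (vertices and edges). -/
def graphComplex {V : Type*} [DecidableEq V] (G : SimpleGraph V) : SComplex V :=
  ofGens ({σ | ∃ x, σ = {x}} ∪ {σ | ∃ x y, G.Adj x y ∧ σ = ({x, y} : Finset V)})

/-- Attach a leaf (pendant edge) to `K` at the vertex `x`. -/
def attachLeaf {V : Type*} [DecidableEq V] (K : SComplex V) (x : V) : SComplex (V ⊕ Unit) :=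
  ofGens ({σ | ∃ α, K.faces α ∧ σ = α.image Sum.inl} ∪
          {({Sum.inl x, Sum.inr ()} : Finset (V ⊕ Unit))})

/-- The cycle graph on `ZMod n`. -/
def cycleGraph (n : ℕ) : SimpleGraph (ZMod n) :=
  SimpleGraph.fromRel (fun i j => j = i + 1)

/-- Attach one new leaf to every vertex of a graph. -/
def addLeaves {V : Type*} [DecidableEq V] (G : SimpleGraph V) : SComplex (V ⊕ V) :=
  ofGens ({σ | ∃ x y, G.Adj x y ∧ σ = ({Sum.inl x, Sum.inl y} : Finset (V ⊕ V))} ∪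
          {σ | ∃ u, σ = ({Sum.inl u, Sum.inr u} : Finset (V ⊕ V))})

/-- The geometric realization of `K`, inside `V → ℝ`. -/
def realization {V : Type*} (K : SComplex V) : Set (V → ℝ) :=
  {f | ∃ σ, K.faces σ ∧ (∀ x, 0 ≤ f x) ∧ (∀ x, f x ≠ 0 → x ∈ σ) ∧ ∑ x ∈ σ, f x = 1}

/-- A Hasse-diagram edge of a poset: a covering pair. -/
structure HEdge (P : Type*) [PartialOrder P] where
  lo : P
  hi : P
  cov : lo ⋖ hi

noncomputable instance {P : Type*} [PartialOrder P] : DecidableEq (HEdge P) :=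
  Classical.decEq _

def HEdge.Compat {P : Type*} [PartialOrder P] (p q : HEdge P) : Prop :=
  p.lo ≠ q.lo ∧ p.lo ≠ q.hi ∧ p.hi ≠ q.lo ∧ p.hi ≠ q.hi

def HasPosetCycle {P : Type*} [PartialOrder P] (W : Set (HEdge P)) : Prop :=
  ∃ k : ℕ, 0 < k ∧ ∃ c : ZMod k → HEdge P, (∀ i, c i ∈ W) ∧
    ∀ i, (c (i + 1)).lo ⋖ (c i).hi ∧ (c (i + 1)).lo ≠ (c i).lo

/-- The generalized Morse complex `f(P)` of a poset: simplices are acyclic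
matchings of the Hasse diagram of `P`. -/
def genMorse (P : Type*) [PartialOrder P] : SComplex (HEdge P) where
  faces S := S.Nonempty ∧ (∀ p ∈ S, ∀ q ∈ S, p ≠ q → HEdge.Compat p q) ∧
    ¬ HasPosetCycle {p | p ∈ S}
  not_empty h := by simpa using h.1
  down_closed := by
    rintro σ τ ⟨-, hm, hc⟩ hsub hne
    refine ⟨hne, fun p hp q hq h => hm p (hsub hp) q (hsub hq) h, fun h => hc ?_⟩
    obtain ⟨k, hk, c, hc', hp⟩ := h
    exact ⟨k, hk, c, fun i => hsub (hc' i), hp⟩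

/-- The automorphism group of a simplicial complex, as a subgroup of `Perm V`. -/
def autGroup {V : Type*} [DecidableEq V] (K : SComplex V) : Subgroup (Equiv.Perm V) where
  carrier := {e | ∀ σ : Finset V, K.faces σ ↔ K.faces (σ.image e)}
  one_mem' := by intro σ; simp
  mul_mem' := by
    intro a b ha hb σ
    rw [hb σ, ha (σ.image b)]
    simp [Finset.image_image, Equiv.Perm.coe_mul]
  inv_mem' := by
    intro a ha σ
    have := ha (σ.image ⇑a⁻¹)
    simpa [Finset.image_image, Function.comp_def, Equiv.apply_symm_apply,
      Finset.image_id'] using this.symm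

/-- The full subcomplex of `K` on a set `S` of vertices. -/
def restrictTo {V : Type*} (K : SComplex V) (S : Set V) : Finset V → Prop :=
  fun σ => K.faces σ ∧ ∀ x ∈ σ, x ∈ S

/-- `S` spans a fully connected subcomplex: `K = (K∣S) * (K∣Sᶜ)`. -/
def FullyConnected {V : Type*} [DecidableEq V] (K : SComplex V) (S : Set V) : Prop :=
  ∀ σ : Finset V, K.faces σ ↔ (σ.Nonempty ∧ ∃ α β : Finset V,
    (restrictTo K S α ∨ α = ∅) ∧ ((K.faces β ∧ ∀ x ∈ β, x ∉ S) ∨ β = ∅) ∧ σ = α ∪ β)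

/-- The primitive pair `(x, xy)` on an edge `{x,y}`. -/
def edgePair {V : Type*} [DecidableEq V] (K : SComplex V) (x y : V) (hxy : x ≠ y)
    (h : K.faces {x, y}) : VPair K where
  lo := {x}
  hi := {x, y}
  lo_face := K.down_closed h (by simp) (Finset.singleton_nonempty x)
  hi_face := h
  lo_sub := by simp
  card_eq := by
    rw [Finset.card_singleton, Finset.card_insert_of_notMem (by simp [hxy]),
      Finset.card_singleton]

/-!
On a graph every primitive pair is `(x, {x, y})` for an edge `{x, y}`, and a V-path walks along
the graph without backtracking; on a path such a walk is monotone, so it never closes up.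
Hence the simplices of `M(P_{m-1})` are exactly the sets of pairwise disjoint primitive pairs.
Listing the pairs along the path as `(x, {x, x+1})`, `(x+1, {x, x+1})`, two pairs share a simplex
iff they are consecutive, so `M(P_{m-1})` is the independence complex of a path on `2 (m - 1)`
vertices `0, …, 2 m - 3`. For `m = 3 n` this is `3 k + 1` vertices. In the independence complex,
`w` dominates `w'` as soon as every neighbour of `w` is one of `w'`: so `3 j` dominates `3 j + 2`
once `3 j - 1` is gone, and after removing every `3 j + 2` the last vertex `3 k` is isolated,
i.e. a cone point.
-/

lemma Finset.image_erase_of_injOn {α β : Type*} [DecidableEq α] [DecidableEq β] {f : α → β}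
    {s : Finset α} (hf : Set.InjOn f s) {a : α} (ha : a ∈ s) :
    (s.erase a).image f = (s.image f).erase (f a) := by
  ext b
  simp only [mem_image, mem_erase]
  constructor
  · rintro ⟨x, ⟨hxa, hx⟩, rfl⟩
    exact ⟨fun h => hxa (hf hx ha h), x, hx, rfl⟩
  · rintro ⟨hb, x, hx, rfl⟩
    exact ⟨x, ⟨fun h => hb (h ▸ rfl), hx⟩, rfl⟩

section IndepFaces

variable {V : Type*} {E : V → V → Prop}

def indepFaces (E : V → V → Prop) (S σ : Finset V) : Prop :=
  σ.Nonempty ∧ σ ⊆ S ∧ ∀ x ∈ σ, ∀ y ∈ σ, x ≠ y → ¬ E x y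

lemma indepFaces_singleton {S : Finset V} {w : V} (hw : w ∈ S) : indepFaces E S {w} :=
  ⟨singleton_nonempty w, singleton_subset_iff.mpr hw, by simp⟩

variable [DecidableEq V]

lemma indepFaces_and_notMem (S : Finset V) (w : V) :
    (fun σ => indepFaces E S σ ∧ w ∉ σ) = indepFaces E (S.erase w) := by
  funext σ
  simp only [indepFaces, subset_erase, eq_iff_iff]
  tauto

lemma SCAux.indepFaces_of_neighbors_subset (hE : ∀ x y, E x y → E y x) {S : Finset V}
    {w w' : V} (hw : w ∈ S) (hw' : w' ∈ S) (hne : w ≠ w') (hww' : ¬ E w w')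
    (hN : ∀ u ∈ S, E w u → E w' u) (h : SCAux (indepFaces E (S.erase w'))) :
    SCAux (indepFaces E S) := by
  refine .step _ w w' hne (indepFaces_singleton hw) (indepFaces_singleton hw') ?_
    (indepFaces_and_notMem S w' ▸ h)
  rintro σ ⟨⟨-, hσS, hσ⟩, hmax⟩ hw'σ
  by_contra hwσ
  have hwσ' : ∀ u ∈ σ, ¬ E w u := fun u hu hwu =>
    (eq_or_ne u w').elim (fun hu' => hww' (hu' ▸ hwu))
      (fun hu' => hσ w' hw'σ u hu (Ne.symm hu') (hN u (hσS hu) hwu))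
  have hins : indepFaces E S (insert w σ) := by
    refine ⟨insert_nonempty _ _, insert_subset hw hσS, ?_⟩
    simp only [mem_insert, forall_eq_or_imp]
    exact ⟨⟨fun h => absurd rfl h, fun u hu _ => hwσ' u hu⟩,
      fun x hx => ⟨fun _ hxw => hwσ' x hx (hE _ _ hxw), hσ x hx⟩⟩
  exact hwσ (hmax _ hins (subset_insert w σ) ▸ mem_insert_self w σ)

lemma SCAux.indepFaces_of_isolated (hE : ∀ x y, E x y → E y x) (S : Finset V) {w : V}
    (hw : w ∈ S) (hiso : ∀ u ∈ S, ¬ E w u) : SCAux (indepFaces E S) := by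
  induction S using Finset.strongInduction with
  | _ S ih =>
    rcases (S.erase w).eq_empty_or_nonempty with hS | ⟨w', hw'⟩
    · have hS : S = {w} := (erase_eq_empty_iff S w).mp hS |>.resolve_left (ne_empty_of_mem hw)
      subst hS
      exact .point _ w fun σ => ⟨fun ⟨hne, hσS, _⟩ => hne.subset_singleton_iff.mp hσS,
        by rintro rfl; exact indepFaces_singleton hw⟩
    · obtain ⟨hw'w, hw'⟩ := mem_erase.mp hw'
      refine .indepFaces_of_neighbors_subset hE hw hw' hw'w.symm (hiso w' hw')
        (fun u hu h => absurd h (hiso u hu)) ?_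
      exact ih _ (erase_ssubset hw') (mem_erase.mpr ⟨hw'w.symm, hw⟩)
        (fun u hu => hiso u (mem_of_mem_erase hu))

lemma SCAux.indepFaces_image_path (hE : ∀ x y, E x y → E y x) (k : ℕ) (f : ℕ → V)
    (hf : Set.InjOn f (range (3 * k + 1)))
    (hEf : ∀ a < 3 * k + 1, ∀ b < 3 * k + 1, E (f a) (f b) ↔ a + 1 = b ∨ b + 1 = a) :
    SCAux (indepFaces E ((range (3 * k + 1)).image f)) := by
  -- `T j` is the path without the vertices `3 i + 2`, `i < j`; in it `3 j` dominates `3 j + 2`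
  let T (j : ℕ) := (range (3 * k + 1)).filter (fun a => a % 3 ≠ 2 ∨ 3 * j ≤ a)
  have hT : ∀ j a, a ∈ T j ↔ a < 3 * k + 1 ∧ (a % 3 ≠ 2 ∨ 3 * j ≤ a) := by
    simp [T]
  suffices ∀ j ≤ k, SCAux (indepFaces E ((T j).image f)) by
    simpa [T] using this 0 (Nat.zero_le k)
  intro j hj
  induction hj using Nat.decreasingInduction with
  | self =>
    refine .indepFaces_of_isolated hE _ (mem_image_of_mem f ((hT k (3 * k)).mpr (by omega))) ?_
    simp only [mem_image, forall_exists_index, and_imp, hT]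
    rintro _ b hb hb3 rfl
    rw [hEf _ (by omega) _ hb]
    omega
  | of_succ j hj ih =>
    have h3j := (hT j (3 * j)).mpr (by omega)
    have h3j2 := (hT j (3 * j + 2)).mpr (by omega)
    have hsub : (T j : Set ℕ) ⊆ range (3 * k + 1) := fun a ha =>
      mem_range.mpr ((hT j a).mp ha).1
    refine .indepFaces_of_neighbors_subset hE (mem_image_of_mem f h3j) (mem_image_of_mem f h3j2)
      (fun h => absurd (hf (by simp; omega) (by simp; omega) h) (by omega))
      ((hEf _ (by omega) _ (by omega)).not.mpr (by omega)) ?_ ?_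
    · simp only [mem_image, forall_exists_index, and_imp, hT]
      rintro _ b hb hb3 rfl hb'
      rw [hEf _ (by omega) _ hb] at hb'
      rw [hEf _ (by omega) _ hb]
      omega
    · have hTsucc : T (j + 1) = (T j).erase (3 * j + 2) := by
        ext a
        simp only [mem_erase, hT]
        omega
      rwa [← image_erase_of_injOn (hf.mono hsub) h3j2, ← hTsucc]

end IndepFaces

@[ext]
lemma VPair.ext {V : Type*} {K : SComplex V} {p q : VPair K} (hlo : p.lo = q.lo)
    (hhi : p.hi = q.hi) : p = q := by
  cases p; cases q; cases hlo; cases hhi; rfl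

lemma VPair.compatible_comm {V : Type*} {K : SComplex V} {p q : VPair K} :
    p.Compatible q ↔ q.Compatible p := by
  unfold VPair.Compatible
  grind

section GraphComplex

variable {V : Type*} [DecidableEq V] {G : SimpleGraph V}

lemma graphComplex_faces_pair {x y : V} (h : G.Adj x y) : (graphComplex G).faces {x, y} :=
  ⟨insert_nonempty _ _, {x, y}, .inr ⟨x, y, h, rfl⟩, subset_rfl⟩

lemma VPair.exists_of_graphComplex (p : VPair (graphComplex G)) :
    ∃ x y, G.Adj x y ∧ p.lo = {x} ∧ p.hi = {x, y} := by
  obtain ⟨-, τ, hτ, hhiτ⟩ := p.hi_face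
  have hlo := card_pos.mpr p.lo_face.1
  have hcard := p.card_eq
  rcases hτ with ⟨x, rfl⟩ | ⟨x, y, hxy, rfl⟩
  · have := card_le_card hhiτ
    rw [card_singleton] at this
    omega
  have hpair := card_pair hxy.ne
  have hhi : p.hi = {x, y} := eq_of_subset_of_card_le hhiτ (by omega)
  obtain ⟨z, hz⟩ := card_eq_one.mp (show p.lo.card = 1 by rw [hhi] at hcard; omega)
  have hzxy : z ∈ ({x, y} : Finset V) := hhi ▸ p.lo_sub (hz ▸ mem_singleton_self z)
  rcases mem_insert.mp hzxy with rfl | hzy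
  · exact ⟨z, y, hxy, hz, hhi⟩
  · rw [mem_singleton.mp hzy] at hz
    exact ⟨y, x, hxy.symm, hz, hhi.trans (pair_comm x y)⟩

lemma VPair.compatible_iff_of_graphComplex {p q : VPair (graphComplex G)} :
    p.Compatible q ↔ p.lo ≠ q.lo ∧ p.hi ≠ q.hi := by
  have hne : ∀ r s : VPair (graphComplex G), r.lo ≠ s.hi := by
    intro r s h
    obtain ⟨x, y, hxy, hr, -⟩ := r.exists_of_graphComplex
    obtain ⟨u, v, huv, -, hs⟩ := s.exists_of_graphComplex
    have := congrArg card h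
    rw [hr, hs, card_singleton, card_pair huv.ne] at this
    omega
  exact ⟨fun h => ⟨h.1, h.2.2.2⟩, fun h => ⟨h.1, hne p q, (hne q p).symm, h.2⟩⟩

lemma exists_nonbacktracking_cycle_of_hasClosedPath {W : Set (VPair (graphComplex G))}
    (hW : IsDVF W) (h : HasClosedPath W) :
    ∃ k, 0 < k ∧ ∃ x : ZMod k → V,
      ∀ i, G.Adj (x i) (x (i + 1)) ∧ x (i + 2) ≠ x i := by
  obtain ⟨k, hk, c, hcW, hc⟩ := h
  choose x y hxy hlo hhi using fun i => (c i).exists_of_graphComplex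
  have hy : ∀ i, x (i + 1) = y i := by
    intro i
    obtain ⟨hsub, hne, -⟩ := hc i
    rw [hlo, hhi, singleton_subset_iff, mem_insert, mem_singleton] at hsub
    rw [hlo, hlo, Ne, singleton_inj] at hne
    exact hsub.resolve_left hne
  refine ⟨k, hk, x, fun i => ⟨hy i ▸ hxy i, fun hback => ?_⟩⟩
  have hcne : c (i + 1) ≠ c i := fun h => (hc i).2.1 (by rw [h])
  refine (VPair.compatible_iff_of_graphComplex.mp (hW _ (hcW _) _ (hcW _) hcne)).2 ?_
  rw [hhi, hhi, ← hy, ← hy, add_assoc, one_add_one_eq_two, hback, pair_comm]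

end GraphComplex

lemma eq_add_mul_of_nonbacktracking_unit_steps (g : ℕ → ℤ)
    (hstep : ∀ j, g (j + 1) = g j + 1 ∨ g j = g (j + 1) + 1) (hback : ∀ j, g (j + 2) ≠ g j)
    (j : ℕ) : g j = g 0 + j * (g 1 - g 0) := by
  have hconst : ∀ j, g (j + 1) - g j = g 1 - g 0 := by
    intro j
    induction j with
    | zero => rfl
    | succ j ih =>
      have : g (j + 1 + 1) ≠ g j := hback j
      rcases hstep j with h | h <;> rcases hstep (j + 1) with h' | h' <;> omega
  induction j with
  | zero => simp
  | succ j ih => push_cast; linarith [hconst j]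

lemma SimpleGraph.pathGraph_exists_backtrack {m k : ℕ} (hk : 0 < k) (x : ZMod k → Fin m)
    (hx : ∀ i, (pathGraph m).Adj (x i) (x (i + 1))) : ∃ i, x (i + 2) = x i := by
  by_contra! hback
  set g : ℕ → ℤ := fun j => (x j : ℕ)
  have hstep : ∀ j, g (j + 1) = g j + 1 ∨ g j = g (j + 1) + 1 := by
    intro j
    have := pathGraph_adj.mp (hx j)
    simp only [g, Nat.cast_succ]
    omega
  have hback' : ∀ j, g (j + 2) ≠ g j := by
    intro j h
    refine hback j (Fin.ext ?_)
    simp only [g, Nat.cast_add, Nat.cast_ofNat] at h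
    exact_mod_cast h
  have := eq_add_mul_of_nonbacktracking_unit_steps g hstep hback' k
  have hgk : g k = g 0 := by simp [g]
  rcases hstep 0 with h | h <;> nlinarith

lemma graphComplex_pathGraph_not_hasClosedPath {m : ℕ}
    {W : Set (VPair (graphComplex (SimpleGraph.pathGraph m)))} (hW : IsDVF W) :
    ¬ HasClosedPath W := fun h =>
  let ⟨_, hk, x, hx⟩ := exists_nonbacktracking_cycle_of_hasClosedPath hW h
  let ⟨i, hi⟩ := SimpleGraph.pathGraph_exists_backtrack hk x fun i => (hx i).1
  (hx i).2 hi

section PathPair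

variable {m : ℕ} (hm : 2 ≤ m)

/-- The `a`-th primitive pair of the path, `a < 2 (m - 1)`: the edge `{a / 2, a / 2 + 1}` paired
with its endpoint `a / 2 + a % 2`. The clamping by `m - 2` only makes the map total. -/
def pathPair (a : ℕ) : VPair (graphComplex (SimpleGraph.pathGraph m)) :=
  let x : Fin m := ⟨min (a / 2) (m - 2), by omega⟩
  let y : Fin m := ⟨min (a / 2) (m - 2) + 1, by omega⟩
  have hxy : (SimpleGraph.pathGraph m).Adj x y := SimpleGraph.pathGraph_adj.mpr (.inl rfl)
  have hface := graphComplex_faces_pair hxy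
  if a % 2 = 0 then edgePair _ x y hxy.ne hface
  else edgePair _ y x hxy.ne.symm (pair_comm x y ▸ hface)

variable {hm} {a b : ℕ}

lemma pathPair_lo (ha : a < 2 * (m - 1)) :
    (pathPair hm a).lo = {⟨a / 2 + a % 2, by omega⟩} := by
  have hmin : min (a / 2) (m - 2) = a / 2 := by omega
  rcases Nat.mod_two_eq_zero_or_one a with h | h <;> simp [pathPair, edgePair, h, hmin]

lemma pathPair_hi (ha : a < 2 * (m - 1)) :
    (pathPair hm a).hi = {⟨a / 2, by omega⟩, ⟨a / 2 + 1, by omega⟩} := by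
  have hmin : min (a / 2) (m - 2) = a / 2 := by omega
  rcases Nat.mod_two_eq_zero_or_one a with h | h <;> simp [pathPair, edgePair, h, hmin, pair_comm]

lemma pathPair_lo_eq_iff (ha : a < 2 * (m - 1)) (hb : b < 2 * (m - 1)) :
    (pathPair hm a).lo = (pathPair hm b).lo ↔ a / 2 + a % 2 = b / 2 + b % 2 := by
  rw [pathPair_lo ha, pathPair_lo hb, singleton_inj, Fin.ext_iff]

lemma pathPair_hi_eq_iff (ha : a < 2 * (m - 1)) (hb : b < 2 * (m - 1)) :
    (pathPair hm a).hi = (pathPair hm b).hi ↔ a / 2 = b / 2 := by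
  rw [pathPair_hi ha, pathPair_hi hb, ← coe_inj, coe_pair, coe_pair, Set.pair_eq_pair_iff]
  simp only [Fin.ext_iff]
  omega

lemma pathPair_injOn : Set.InjOn (pathPair hm) (range (2 * (m - 1))) := by
  intro a ha b hb h
  rw [coe_range, Set.mem_Iio] at ha hb
  have hlo := (pathPair_lo_eq_iff ha hb).mp (congrArg VPair.lo h)
  have hhi := (pathPair_hi_eq_iff ha hb).mp (congrArg VPair.hi h)
  omega

lemma exists_pathPair_eq (p : VPair (graphComplex (SimpleGraph.pathGraph m))) :
    ∃ a < 2 * (m - 1), pathPair hm a = p := by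
  obtain ⟨x, y, hxy, hlo, hhi⟩ := p.exists_of_graphComplex
  have hy := y.isLt
  rcases SimpleGraph.pathGraph_adj.mp hxy with h | h
  · refine ⟨2 * x, by omega, VPair.ext ?_ ?_⟩
    · rw [pathPair_lo (by omega), hlo]
      ext z; simp [Fin.ext_iff]
    · rw [pathPair_hi (by omega), hhi]
      ext z; simp [Fin.ext_iff]; omega
  · refine ⟨2 * y + 1, by omega, VPair.ext ?_ ?_⟩
    · rw [pathPair_lo (by omega), hlo]
      ext z; simp [Fin.ext_iff]; omega
    · rw [pathPair_hi (by omega), hhi]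
      ext z; simp [Fin.ext_iff]; omega

lemma pathPair_conflict_iff (ha : a < 2 * (m - 1)) (hb : b < 2 * (m - 1)) :
    (pathPair hm a ≠ pathPair hm b ∧ ¬ (pathPair hm a).Compatible (pathPair hm b)) ↔
      a + 1 = b ∨ b + 1 = a := by
  rw [pathPair_injOn.ne_iff (by simpa using ha) (by simpa using hb),
    VPair.compatible_iff_of_graphComplex, Ne, Ne, Ne, pathPair_lo_eq_iff ha hb,
    pathPair_hi_eq_iff ha hb]
  omega

end PathPair

lemma morseComplex_pathGraph_faces {m : ℕ} (hm : 2 ≤ m) :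
    (MorseComplex (graphComplex (SimpleGraph.pathGraph m))).faces =
      indepFaces (fun p q => p ≠ q ∧ ¬ p.Compatible q)
        ((range (2 * (m - 1))).image (pathPair hm)) := by
  funext σ
  apply propext
  constructor
  · rintro ⟨hne, hdvf, -⟩
    refine ⟨hne, fun p _ => ?_, fun p hp q hq hpq h => h.2 (hdvf p hp q hq hpq)⟩
    obtain ⟨a, ha, rfl⟩ := exists_pathPair_eq (hm := hm) p
    exact mem_image_of_mem _ (mem_range.mpr ha)
  · rintro ⟨hne, -, hind⟩
    have hdvf : IsDVF {p | p ∈ σ} := fun p hp q hq hpq =>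
      not_not.mp fun h => hind p hp q hq hpq ⟨hpq, h⟩
    exact ⟨hne, hdvf, graphComplex_pathGraph_not_hasClosedPath hdvf⟩

/-- the Morse complex of the path `P_{3n-1}` on `3n` vertices is
strongly collapsible. -/
theorem stmt_6 (n : ℕ) (hn : 1 ≤ n) :
    StronglyCollapsible (MorseComplex (graphComplex (SimpleGraph.pathGraph (3 * n)))) := by
  have hm : 2 ≤ 3 * n := by omega
  have hk : 2 * (3 * n - 1) = 3 * (2 * n - 1) + 1 := by omega
  rw [StronglyCollapsible, morseComplex_pathGraph_faces hm, hk]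
  refine .indepFaces_image_path (fun p q h => ⟨h.1.symm, VPair.compatible_comm.not.mp h.2⟩) _ _
    (hk ▸ pathPair_injOn) fun a ha b hb => pathPair_conflict_iff (hk ▸ ha) (hk ▸ hb)
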